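/- arXiv:2006.10491 — 5 statements merged into one kernel-verified Lean document; each statement's English description precedes it below -/
import Mathlib

section
/- The sequence of labeling functions (λᵏ)_{k∈ℕ} defined on the vertices of the extended reachability game is monotone nondecreasing: for all k ∈ ℕ and all vertices v, λᵏ(v) ≤ λᵏ⁺¹(v). -/
/-- A (turn-based) reachability game: edges, an owner for every vertex, and a target
set for every player.  Every vertex has a successor. -/
structure RGame (V P : Type) where
  edge : V → V → Prop
  owner : V → P
  target : P → Set V
  succ_nonempty : ∀ v, ∃ v', edge v v'

def RGame.IsPlay {V P : Type} (G : RGame V P) (ρ : ℕ → V) : Prop :=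
  ∀ n, G.edge (ρ n) (ρ (n + 1))

/-- Boolean gain, as a proposition: player `i` wins `ρ` iff `ρ` visits `target i`. -/
def RGame.Gain {V P : Type} (G : RGame V P) (i : P) (ρ : ℕ → V) : Prop :=
  ∃ n, ρ n ∈ G.target i

/-- `ρ` is `lam`-consistent: whenever `lam (ρ n)` holds (i.e. `λ(ρₙ) = 1`), the owner
of `ρₙ` wins the suffix `ρ_{≥ n}`. -/
def RGame.Consistent {V P : Type} (G : RGame V P) (lam : V → Prop) (ρ : ℕ → V) : Prop :=
  ∀ n, lam (ρ n) → G.Gain (G.owner (ρ n)) (fun m => ρ (n + m))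

/-- The sequence of labeling functions `λᵏ` (value `1` encoded as `True`):
`λ⁰ ≡ 0` and `λᵏ⁺¹(v) = max_{v' ∈ Succ(v)} min {Gainᵢ(ρ) : ρ play from v', ρ ⊨ λᵏ}`
where `v` belongs to player `i`. -/
def RGame.lamSeq {V P : Type} (G : RGame V P) : ℕ → V → Prop
  | 0 => fun _ => False
  | k + 1 => fun v => ∃ v', G.edge v v' ∧
      ∀ ρ : ℕ → V, ρ 0 = v' → G.IsPlay ρ → G.Consistent (G.lamSeq k) ρ → G.Gain (G.owner v) ρ

namespace RGame

variable {V P : Type}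

theorem Consistent.anti {G : RGame V P} {lam lam' : V → Prop} (hle : ∀ v, lam v → lam' v)
    {ρ : ℕ → V} (hρ : G.Consistent lam' ρ) : G.Consistent lam ρ :=
  fun n hn => hρ n (hle _ hn)

/-- Strengthening `λᵏ` shrinks the set of consistent plays over which the minimum is taken. -/
theorem lamSeq_succ_mono (G : RGame V P) {k l : ℕ}
    (hle : ∀ v, G.lamSeq k v → G.lamSeq l v) {v : V} (hv : G.lamSeq (k + 1) v) :
    G.lamSeq (l + 1) v := by
  obtain ⟨v', hedge, hwin⟩ := hv
  exact ⟨v', hedge, fun ρ h0 hplay hcons => hwin ρ h0 hplay (hcons.anti hle)⟩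

end RGame

/-- The sequence `(λᵏ)` is pointwise monotone nondecreasing: `λᵏ(v) ≤ λᵏ⁺¹(v)`. -/
theorem stmt4 {V P : Type} (G : RGame V P) :
    ∀ (k : ℕ) (v : V), G.lamSeq k v → G.lamSeq (k + 1) v := by
  intro k
  induction k with
  | zero => exact fun _ h => h.elim
  | succ k ih => exact fun _ => G.lamSeq_succ_mono ih
end

section
/- Region equivalence is preserved under clock resets: if ν ≈ ν' and Y ⊆ C is a set of clocks, then [Y ← 0]ν ≈ [Y ← 0]ν', where [Y ← 0]ν sets all clocks in Y to 0 and leaves the others unchanged. -/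
/-! A reset clock is `0` under both valuations, so its integral parts agree and its fractional
part is `0`, the least possible; an unreset clock keeps its values. The only case needing more
than this is comparing the fractional part of a kept clock with that of a reset one: since
fractional parts are nonnegative, `fract v ≤ 0` means `fract v = 0`, which is transferred by the
zeroness clause of region equivalence. -/

/-- Region equivalence of clock valuations `ν, ν' : Fin k → ℝ≥0` with respect to the
per-clock maximal constants `x i`:
(i) equal integral parts, or both values exceed `x i`;
(ii) for bounded clocks, fractional part zero iff the other's fractional part is zero;
(iii) for pairs of bounded clocks, the same ordering of fractional parts. -/
def RegEquiv (k : ℕ) (x : Fin k → ℕ) (ν ν' : Fin k → NNReal) : Prop :=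
  (∀ i, ⌊(ν i : ℝ)⌋ = ⌊(ν' i : ℝ)⌋ ∨ ((x i : ℝ) < (ν i : ℝ) ∧ (x i : ℝ) < (ν' i : ℝ))) ∧
  (∀ i, (ν i : ℝ) ≤ (x i : ℝ) →
    (Int.fract ((ν i : ℝ)) = 0 ↔ Int.fract ((ν' i : ℝ)) = 0)) ∧
  (∀ i j, i ≠ j → (ν i : ℝ) ≤ (x i : ℝ) → (ν j : ℝ) ≤ (x j : ℝ) →
    (Int.fract ((ν i : ℝ)) ≤ Int.fract ((ν j : ℝ)) ↔
      Int.fract ((ν' i : ℝ)) ≤ Int.fract ((ν' j : ℝ))))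

/-- `[Y ← 0]ν` : reset the clocks in `Y` to `0`, leave the others unchanged. -/
def resetVal {k : ℕ} (Y : Finset (Fin k)) (ν : Fin k → NNReal) : Fin k → NNReal :=
  fun i => if i ∈ Y then 0 else ν i

section resetVal

variable {k : ℕ} {Y : Finset (Fin k)} {ν : Fin k → NNReal} {i : Fin k}

@[simp]
lemma resetVal_of_mem (h : i ∈ Y) : resetVal Y ν i = 0 := if_pos h

@[simp]
lemma resetVal_of_notMem (h : i ∉ Y) : resetVal Y ν i = ν i := if_neg h

end resetVal

/-- Region equivalence is preserved under clock resets. -/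
theorem stmt13 (k : ℕ) (x : Fin k → ℕ) (ν ν' : Fin k → NNReal)
    (hequiv : RegEquiv k x ν ν') (Y : Finset (Fin k)) :
    RegEquiv k x (resetVal Y ν) (resetVal Y ν') := by
  obtain ⟨hfloor, hzero, horder⟩ := hequiv
  refine ⟨fun i => ?_, fun i hi => ?_, fun i j hij hi hj => ?_⟩
  · by_cases hiY : i ∈ Y
    · simp [hiY]
    · simpa [hiY] using hfloor i
  · by_cases hiY : i ∈ Y
    · simp [hiY]
    · simp only [resetVal_of_notMem hiY] at hi ⊢
      exact hzero i hi
  · by_cases hiY : i ∈ Y <;> by_cases hjY : j ∈ Y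
    · simp [hiY, hjY]
    · simp [hiY, hjY, Int.fract_nonneg]
    · simp only [resetVal_of_notMem hiY, resetVal_of_mem hjY, NNReal.coe_zero, Int.fract_zero]
        at hi ⊢
      rw [(Int.fract_nonneg _).ge_iff_eq', (Int.fract_nonneg _).ge_iff_eq']
      exact hzero i hi
    · simp only [resetVal_of_notMem hiY, resetVal_of_notMem hjY] at hi hj ⊢
      exact horder i j hij hi hj
end

section
/- Region equivalence satisfies the time-abstract successor property: if ν ≈ ν' and d ∈ ℝ≥0, then there exists d' ∈ ℝ≥0 such that ν + d ≈ ν' + d'. -/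
/-
Write `d = ⌊d⌋ + c` with `c = fract d`. Delaying a bounded clock by `d` adds `⌊d⌋` to its integral
part and rotates its fractional part by `c`, carrying `1` exactly when the fractional part is at
least `1 - c`. Hence `ν + d ≈ ν' + (⌊d⌋ + c')` as soon as `1 - c'` lies among the fractional parts
of `ν'` exactly as `1 - c` lies among those of `ν`. Since the fractional parts of the bounded clocks
of `ν` and `ν'`, together with `0` and `1`, are in order-preserving correspondence, such a point
exists by the extension step of the back-and-forth argument in the dense order `ℝ`.
-/

open Int (fract)

theorem cmp_eq_cmp_of_le_iff_le {α β : Type*} [LinearOrder α] [LinearOrder β] {x y : α}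
    {x' y' : β} (h₁ : x ≤ y ↔ x' ≤ y') (h₂ : y ≤ x ↔ y' ≤ x') : cmp x y = cmp x' y' := by
  rcases lt_trichotomy x y with h | h | h
  · rw [h.cmp_eq_lt, (not_le.mp (h₂.not.mp h.not_ge)).cmp_eq_lt]
  · rw [h.cmp_eq_eq, (le_antisymm (h₁.mp h.le) (h₂.mp h.ge)).cmp_eq_eq]
  · rw [h.cmp_eq_gt, (not_le.mp (h₁.not.mp h.not_ge)).cmp_eq_gt]

namespace Int

variable {R : Type*} [CommRing R] [LinearOrder R] [IsStrictOrderedRing R] [FloorRing R]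

theorem floor_add_eq_ite (t u : R) :
    ⌊t + u⌋ = ⌊t⌋ + ⌊u⌋ + if fract t < 1 - fract u then 0 else 1 := by
  have hcarry : ⌊fract t + fract u⌋ = if fract t < 1 - fract u then 0 else 1 := by
    have := fract_nonneg t; have := fract_nonneg u
    have := fract_lt_one t; have := fract_lt_one u
    split_ifs <;> exact floor_eq_iff.mpr ⟨by push_cast; linarith, by push_cast; linarith⟩
  rw [← hcarry, ← floor_intCast_add]
  congr 1
  push_cast
  linarith [floor_add_fract t, floor_add_fract u]

theorem fract_add_eq_ite (t u : R) :
    fract (t + u) = fract t + fract u - if fract t < 1 - fract u then 0 else 1 := by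
  rw [← self_sub_floor, floor_add_eq_ite, ← self_sub_floor t, ← self_sub_floor u]
  split_ifs <;> push_cast <;> ring

theorem eq_zero_iff_floor_eq_zero_and_fract_eq_zero (u : R) :
    u = 0 ↔ ⌊u⌋ = 0 ∧ fract u = 0 :=
  ⟨fun h => by simp [h], fun ⟨hf, hfr⟩ => by rw [← floor_add_fract u, hf, hfr]; simp⟩

theorem fract_add_eq_zero_iff (t u : R) :
    fract (t + u) = 0 ↔ (fract t = 0 ∧ fract u = 0) ∨ fract t = 1 - fract u := by
  have := fract_nonneg t; have := fract_nonneg u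
  have := fract_lt_one t; have := fract_lt_one u
  rw [fract_add_eq_ite]
  split_ifs <;> grind

theorem fract_add_le_fract_add_iff (t s u : R) :
    fract (t + u) ≤ fract (s + u) ↔
      (¬ fract t < 1 - fract u ∧ fract s < 1 - fract u) ∨
        ((fract t < 1 - fract u ↔ fract s < 1 - fract u) ∧ fract t ≤ fract s) := by
  have := fract_nonneg t; have := fract_nonneg s; have := fract_nonneg u
  have := fract_lt_one t; have := fract_lt_one s; have := fract_lt_one u
  rw [fract_add_eq_ite, fract_add_eq_ite]
  split_ifs <;> grind

variable {t t' s s' u u' : R}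

theorem floor_add_eq_floor_add_of_cmp (ht : ⌊t⌋ = ⌊t'⌋) (hu : ⌊u⌋ = ⌊u'⌋)
    (hcmp : cmp (fract t) (1 - fract u) = cmp (fract t') (1 - fract u')) :
    ⌊t + u⌋ = ⌊t' + u'⌋ := by
  simp only [floor_add_eq_ite, ht, hu, lt_iff_lt_of_cmp_eq_cmp hcmp]

theorem fract_add_eq_zero_iff_of_cmp (ht : fract t = 0 ↔ fract t' = 0)
    (hu : fract u = 0 ↔ fract u' = 0)
    (hcmp : cmp (fract t) (1 - fract u) = cmp (fract t') (1 - fract u')) :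
    fract (t + u) = 0 ↔ fract (t' + u') = 0 := by
  rw [fract_add_eq_zero_iff, fract_add_eq_zero_iff, ht, hu, eq_iff_eq_of_cmp_eq_cmp hcmp]

theorem fract_add_le_fract_add_iff_of_cmp (hts : fract t ≤ fract s ↔ fract t' ≤ fract s')
    (ht : cmp (fract t) (1 - fract u) = cmp (fract t') (1 - fract u'))
    (hs : cmp (fract s) (1 - fract u) = cmp (fract s') (1 - fract u')) :
    fract (t + u) ≤ fract (s + u) ↔ fract (t' + u') ≤ fract (s' + u') := by
  rw [fract_add_le_fract_add_iff, fract_add_le_fract_add_iff, hts, lt_iff_lt_of_cmp_eq_cmp ht,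
    lt_iff_lt_of_cmp_eq_cmp hs]

end Int

namespace RegEquiv

variable {k : ℕ} {x : Fin k → ℕ} {ν ν' : Fin k → NNReal}

theorem floor_eq (h : RegEquiv k x ν ν') {i : Fin k} (hi : (ν i : ℝ) ≤ x i) :
    ⌊(ν i : ℝ)⌋ = ⌊(ν' i : ℝ)⌋ :=
  (h.1 i).resolve_right fun h' => hi.not_gt h'.1

theorem natCast_le_of_lt (h : RegEquiv k x ν ν') {i : Fin k} (hi : (x i : ℝ) < ν i) :
    (x i : ℝ) ≤ ν' i := by
  rcases h.1 i with hfloor | ⟨-, hi'⟩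
  · calc (x i : ℝ) ≤ ⌊(ν i : ℝ)⌋ := by exact_mod_cast Int.le_floor.mpr (by exact_mod_cast hi.le)
      _ = ⌊(ν' i : ℝ)⌋ := by rw [hfloor]
      _ ≤ ν' i := Int.floor_le _
  · exact hi'.le

theorem fract_le_fract_iff (h : RegEquiv k x ν ν') {i j : Fin k} (hi : (ν i : ℝ) ≤ x i)
    (hj : (ν j : ℝ) ≤ x j) :
    fract (ν i : ℝ) ≤ fract (ν j : ℝ) ↔ fract (ν' i : ℝ) ≤ fract (ν' j : ℝ) := by
  rcases eq_or_ne i j with rfl | hij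
  · simp only [le_refl]
  · exact h.2.2 i j hij hi hj

theorem exists_cmp_fract_eq (h : RegEquiv k x ν ν') {c : ℝ} (hc₀ : 0 ≤ c) (hc₁ : c < 1) :
    ∃ c' : ℝ, 0 ≤ c' ∧ c' < 1 ∧ (c = 0 ↔ c' = 0) ∧
      ∀ i, (ν i : ℝ) ≤ x i → cmp (fract (ν i : ℝ)) (1 - c) = cmp (fract (ν' i : ℝ)) (1 - c') := by
  classical
  let S : Finset (ℝ × ℝ) := insert (0, 0) <| insert (1, 1) <|
    (Finset.univ.filter fun i => (ν i : ℝ) ≤ x i).image fun i => (fract (ν i : ℝ), fract (ν' i : ℝ))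
  have hzero : ∀ i, (ν i : ℝ) ≤ x i → cmp 0 (fract (ν i : ℝ)) = cmp 0 (fract (ν' i : ℝ)) :=
    fun i hi => cmp_eq_cmp_of_le_iff_le (iff_of_true (Int.fract_nonneg _) (Int.fract_nonneg _))
      (by rw [(Int.fract_nonneg _).ge_iff_eq', (Int.fract_nonneg _).ge_iff_eq', h.2.1 i hi])
  have hone : ∀ i, cmp 1 (fract (ν i : ℝ)) = cmp 1 (fract (ν' i : ℝ)) :=
    fun i => (Int.fract_lt_one _).cmp_eq_gt.trans (Int.fract_lt_one _).cmp_eq_gt.symm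
  have hS : ∀ p ∈ S, ∀ q ∈ S, cmp p.1 q.1 = cmp p.2 q.2 := by
    simp only [S, Finset.forall_mem_insert, Finset.forall_mem_image, Finset.mem_filter,
      Finset.mem_univ, true_and]
    refine ⟨hzero, fun i _ => hone i, fun i hi => ⟨?_, ?_, fun j hj => ?_⟩⟩
    · exact cmp_eq_cmp_symm.mp (hzero i hi)
    · exact cmp_eq_cmp_symm.mp (hone i)
    · exact cmp_eq_cmp_of_le_iff_le (h.fract_le_fract_iff hi hj) (h.fract_le_fract_iff hj hi)
  obtain ⟨b, hb⟩ := Order.PartialIso.exists_across ⟨S, hS⟩ (1 - c)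
  have h₀ : cmp 0 (1 - c) = cmp 0 b := hb (0, 0) (by simp [S])
  have h₁ : cmp (1 - c) 1 = cmp b 1 := cmp_eq_cmp_symm.mp (hb (1, 1) (by simp [S]))
  refine ⟨1 - b, ?_, ?_, ?_, fun i hi => ?_⟩
  · linarith [(le_iff_le_of_cmp_eq_cmp h₁).mp (by linarith)]
  · linarith [(lt_iff_lt_of_cmp_eq_cmp h₀).mp (by linarith)]
  · rw [sub_eq_zero, eq_comm (a := (1 : ℝ)), ← eq_iff_eq_of_cmp_eq_cmp h₁, sub_eq_self]
  · rw [sub_sub_cancel]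
    exact hb _ (Finset.mem_insert_of_mem <| Finset.mem_insert_of_mem <| Finset.mem_image_of_mem _ <|
      Finset.mem_filter.mpr ⟨Finset.mem_univ i, hi⟩)

theorem add_of_cmp (h : RegEquiv k x ν ν') {d d' : NNReal} (hfloor : ⌊(d : ℝ)⌋ = ⌊(d' : ℝ)⌋)
    (hfract : fract (d : ℝ) = 0 ↔ fract (d' : ℝ) = 0)
    (hcmp : ∀ i, (ν i : ℝ) ≤ x i →
      cmp (fract (ν i : ℝ)) (1 - fract (d : ℝ)) = cmp (fract (ν' i : ℝ)) (1 - fract (d' : ℝ))) :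
    RegEquiv k x (fun i => ν i + d) (fun i => ν' i + d') := by
  have hbdd : ∀ i, ((ν i + d : NNReal) : ℝ) ≤ x i → (ν i : ℝ) ≤ x i :=
    fun i hi => le_trans (by simp) hi
  refine ⟨fun i => ?_, fun i hi => ?_, fun i j _ hi hj => ?_⟩
  · simp only [NNReal.coe_add]
    by_cases hi : (ν i : ℝ) ≤ x i
    · exact Or.inl (Int.floor_add_eq_floor_add_of_cmp (h.floor_eq hi) hfloor (hcmp i hi))
    push Not at hi
    rcases eq_or_ne (d' : ℝ) 0 with hd' | hd'
    · have hd : (d : ℝ) = 0 := by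
        rw [Int.eq_zero_iff_floor_eq_zero_and_fract_eq_zero, hfloor, hfract,
          ← Int.eq_zero_iff_floor_eq_zero_and_fract_eq_zero]
        exact hd'
      simpa only [hd, hd', add_zero] using h.1 i
    · exact Or.inr ⟨hi.trans_le (le_add_of_nonneg_right d.2),
        (h.natCast_le_of_lt hi).trans_lt (lt_add_of_pos_right _ (d'.2.lt_of_ne hd'.symm))⟩
  · exact Int.fract_add_eq_zero_iff_of_cmp (h.2.1 i (hbdd i hi)) hfract (hcmp i (hbdd i hi))
  · exact Int.fract_add_le_fract_add_iff_of_cmp (h.fract_le_fract_iff (hbdd i hi) (hbdd j hj))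
      (hcmp i (hbdd i hi)) (hcmp j (hbdd j hj))

end RegEquiv

/-- Time-abstract successor property: if `ν ≈ ν'` and `d ≥ 0`, then there is `d' ≥ 0`
with `ν + d ≈ ν' + d'`. -/
theorem stmt14 (k : ℕ) (x : Fin k → ℕ) (ν ν' : Fin k → NNReal)
    (hequiv : RegEquiv k x ν ν') (d : NNReal) :
    ∃ d' : NNReal, RegEquiv k x (fun i => ν i + d) (fun i => ν' i + d') := by
  obtain ⟨c', hc'₀, hc'₁, hzero, hcmp⟩ :=
    hequiv.exists_cmp_fract_eq (Int.fract_nonneg (d : ℝ)) (Int.fract_lt_one (d : ℝ))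
  have hc' : c' ∈ Set.Ico 0 1 := ⟨hc'₀, hc'₁⟩
  let d' : NNReal := ⟨⌊(d : ℝ)⌋₊ + c', by positivity⟩
  have hd' : (d' : ℝ) = ⌊(d : ℝ)⌋₊ + c' := rfl
  have hfloor : ⌊(d : ℝ)⌋ = ⌊(d' : ℝ)⌋ := by
    rw [hd', Int.floor_natCast_add, Int.floor_eq_zero_iff.mpr hc', add_zero]
    exact (Int.natCast_floor_eq_floor d.2).symm
  have hfract : fract (d' : ℝ) = c' := by
    rw [hd', Int.fract_natCast_add, Int.fract_eq_self.mpr hc']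
  exact ⟨d', hequiv.add_of_cmp hfloor (by rwa [hfract]) (by rwa [hfract])⟩
end

section
/- In a finite reachability game, fix a gain profile p ∈ {0,1}^Π and a labeling λ : V → {0,1}. There exists a play ρ from a vertex v with gain profile exactly p that is λ-consistent if and only if there exists a play from v with gain profile p in the subgame obtained by deleting every vertex u belonging to a player i with pᵢ = 0 and λ(u) = 1 (together with its incident edges). -/
/-! Since target sets are closed under edges, a play reaches `F i` from position `n` on iff it
reaches `F i` at all, i.e. iff `p i` holds for the play's gain profile. So `lam`-consistency at
a vertex `u` with `lam u` says exactly that the owner of `u` wins, which for a play with gain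
profile `p` means that `u` is not one of the deleted vertices. Both sides are thus witnessed by
the same plays. -/

theorem mem_of_le_of_forall_rel {V : Type} {E : V → V → Prop} {S : Set V}
    (hS : ∀ u u', E u u' → u ∈ S → u' ∈ S) {ρ : ℕ → V} (hρ : ∀ n, E (ρ n) (ρ (n + 1)))
    {m n : ℕ} (hmn : m ≤ n) (hm : ρ m ∈ S) : ρ n ∈ S := by
  induction n, hmn using Nat.le_induction with
  | base => exact hm
  | succ k _ ih => exact hS _ _ (hρ k) ih

theorem exists_add_mem_iff_exists_mem {V : Type} {E : V → V → Prop} {S : Set V}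
    (hS : ∀ u u', E u u' → u ∈ S → u' ∈ S) {ρ : ℕ → V} (hρ : ∀ n, E (ρ n) (ρ (n + 1)))
    (n : ℕ) : (∃ m, ρ (n + m) ∈ S) ↔ ∃ m, ρ m ∈ S :=
  ⟨fun ⟨m, hm⟩ => ⟨n + m, hm⟩,
    fun ⟨m, hm⟩ => ⟨m, mem_of_le_of_forall_rel hS hρ (Nat.le_add_left m n) hm⟩⟩

theorem stmt15_general {V P : Type}
    (E : V → V → Prop) (owner : V → P) (F : P → Set V)
    (hpersist : ∀ (i : P) (u u' : V), E u u' → u ∈ F i → u' ∈ F i)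
    (p : P → Prop) (lam : V → Prop) (v : V) :
    (∃ ρ : ℕ → V, ρ 0 = v ∧ (∀ n, E (ρ n) (ρ (n + 1))) ∧
      (∀ i, (∃ n, ρ n ∈ F i) ↔ p i) ∧
      (∀ n, lam (ρ n) → ∃ m, ρ (n + m) ∈ F (owner (ρ n)))) ↔
    (∃ ρ : ℕ → V, ρ 0 = v ∧ (∀ n, E (ρ n) (ρ (n + 1))) ∧
      (∀ i, (∃ n, ρ n ∈ F i) ↔ p i) ∧
      (∀ n, ¬(¬p (owner (ρ n)) ∧ lam (ρ n)))) := by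
  refine exists_congr fun ρ => and_congr_right fun _ => and_congr_right fun hρ =>
    and_congr_right fun hgain => forall_congr' fun n => ?_
  rw [exists_add_mem_iff_exists_mem (hpersist _) hρ, hgain]
  tauto

/-- In a finite (extended) reachability game — target sets being forward-persistent
along edges, as in the extended game — for a gain profile `p` and a labeling `lam`:
there is a `lam`-consistent play from `v` with gain profile exactly `p` iff there is a
play from `v` with gain profile `p` in the subgame obtained by deleting every vertex
`u` owned by a player `i` with `pᵢ = 0` and `lam u = 1`. -/
theorem stmt15 {V P : Type} [Fintype V] [Fintype P]
    (E : V → V → Prop) (owner : V → P) (F : P → Set V)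
    (hpersist : ∀ (i : P) (u u' : V), E u u' → u ∈ F i → u' ∈ F i)
    (p : P → Prop) (lam : V → Prop) (v : V) :
    (∃ ρ : ℕ → V, ρ 0 = v ∧ (∀ n, E (ρ n) (ρ (n + 1))) ∧
      (∀ i, (∃ n, ρ n ∈ F i) ↔ p i) ∧
      (∀ n, lam (ρ n) → ∃ m, ρ (n + m) ∈ F (owner (ρ n)))) ↔
    (∃ ρ : ℕ → V, ρ 0 = v ∧ (∀ n, E (ρ n) (ρ (n + 1))) ∧
      (∀ i, (∃ n, ρ n ∈ F i) ↔ p i) ∧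
      (∀ n, ¬(¬p (owner (ρ n)) ∧ lam (ρ n)))) :=
  stmt15_general E owner F hpersist p lam v
end

section
/- The number of regions of the clock-valuation region equivalence over k clocks with maximal constants x₁,…,x_k is finite; in particular, it is bounded by k! · 2^k · ∏_{i=1}^{k} (2xᵢ + 2). -/
open Function Set

theorem Function.FactorsThrough.finite_range_and_ncard_range_le {α β γ : Type*} [Finite γ]
    {f : α → β} {g : α → γ} (hfg : FactorsThrough f g) :
    (range f).Finite ∧ (range f).ncard ≤ Nat.card γ := by
  let e : range f → γ := fun b => g b.2.choose
  have he : Injective e := fun b b' hbb' =>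
    Subtype.ext (by rw [← b.2.choose_spec, ← b'.2.choose_spec]; exact hfg hbb')
  have : Finite (range f) := Finite.of_injective e he
  exact ⟨toFinite _, Nat.card_coe_set_eq (range f) ▸ Nat.card_le_card_of_injective e he⟩

section Jumps

variable {α β : Type*} [LinearOrder α] [WellFoundedLT α] [LinearOrder β]

/-- `t` is a jump of `h` when `h t` strictly exceeds every earlier value. -/
theorem Monotone.lt_iff_exists_jump {h : α → β} (mh : Monotone h) {a b : α} :
    h a < h b ↔ ∃ t, a < t ∧ t ≤ b ∧ ∀ s < t, h s < h t := by
  constructor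
  · intro hab
    obtain ⟨t, ⟨htb, hat⟩, hmin⟩ :=
      wellFounded_lt.has_min {t | t ≤ b ∧ h a < h t} ⟨b, le_rfl, hab⟩
    refine ⟨t, lt_of_not_ge fun hta => (mh hta).not_gt hat, htb, fun s hst => ?_⟩
    by_cases has : h a < h s
    · exact absurd hst (hmin s ⟨hst.le.trans htb, has⟩)
    · exact (le_of_not_gt has).trans_lt hat
  · rintro ⟨t, hat, htb, ht⟩
    exact (ht a hat).trans_le (mh htb)

theorem Monotone.le_iff_le_of_jump_iff {h h' : α → β} (mh : Monotone h) (mh' : Monotone h')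
    (hjump : ∀ t, (∀ s < t, h s < h t) ↔ (∀ s < t, h' s < h' t)) (a b : α) :
    h a ≤ h b ↔ h' a ≤ h' b := by
  rw [← not_lt, ← not_lt, mh.lt_iff_exists_jump, mh'.lt_iff_exists_jump]
  simp only [hjump]

end Jumps

namespace RegEquiv

variable {k : ℕ} (x : Fin k → ℕ)

noncomputable def boundedFract (ν : Fin k → NNReal) (i : Fin k) : ℝ :=
  if (ν i : ℝ) ≤ x i then Int.fract (ν i : ℝ) else -1

noncomputable def clockCode (ν : Fin k → NNReal) (i : Fin k) : ℕ :=
  if (ν i : ℝ) ≤ x i then 2 * ⌊(ν i : ℝ)⌋₊ + if Int.fract (ν i : ℝ) = 0 then 0 else 1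
  else 2 * x i + 1

noncomputable def sortPerm (ν : Fin k → NNReal) : Equiv.Perm (Fin k) :=
  Tuple.sort (boundedFract x ν)

noncomputable def regionBit (ν : Fin k → NNReal) (t : Fin k) : Prop :=
  if (ν (sortPerm x ν t) : ℝ) ≤ x (sortPerm x ν t) then
    ∀ s < t, boundedFract x ν (sortPerm x ν s) < boundedFract x ν (sortPerm x ν t)
  else (ν (sortPerm x ν t) : ℝ) < x (sortPerm x ν t) + 1

variable {x}

theorem neg_one_le_boundedFract (ν : Fin k → NNReal) (i : Fin k) : -1 ≤ boundedFract x ν i := by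
  unfold boundedFract
  split_ifs
  · linarith [Int.fract_nonneg (ν i : ℝ)]
  · exact le_rfl

theorem clockCode_le_iff {ν : Fin k → NNReal} {i : Fin k} :
    clockCode x ν i ≤ 2 * x i ↔ (ν i : ℝ) ≤ x i := by
  unfold clockCode
  split_ifs with hb hfr
  · simpa [hb] using Nat.floor_le_of_le hb
  · have hlt : (ν i : ℝ) < x i := hb.lt_of_ne fun h => hfr (h ▸ Int.fract_natCast _)
    have := (Nat.floor_lt (NNReal.coe_nonneg _)).2 hlt
    simp only [hb, iff_true]
    omega
  · simp only [hb, iff_false]; omega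

theorem clockCode_lt (ν : Fin k → NNReal) (i : Fin k) : clockCode x ν i < 2 * x i + 2 := by
  by_cases hb : (ν i : ℝ) ≤ x i
  · linarith [clockCode_le_iff.2 hb]
  · simp [clockCode, hb]

variable (x) in
noncomputable def regionCode (ν : Fin k → NNReal) :
    (∀ i, Fin (2 * x i + 2)) × Equiv.Perm (Fin k) × (Fin k → Prop) :=
  (fun i => ⟨clockCode x ν i, clockCode_lt ν i⟩, sortPerm x ν, regionBit x ν)

variable {ν μ : Fin k → NNReal}

theorem clockCode_eq_of_regionCode_eq (h : regionCode x ν = regionCode x μ) (i : Fin k) :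
    clockCode x ν i = clockCode x μ i :=
  congrArg Fin.val (congrFun (congrArg Prod.fst h) i)

theorem sortPerm_eq_of_regionCode_eq (h : regionCode x ν = regionCode x μ) :
    sortPerm x ν = sortPerm x μ :=
  congrArg (fun c => c.2.1) h

theorem regionBit_eq_of_regionCode_eq (h : regionCode x ν = regionCode x μ) :
    regionBit x ν = regionBit x μ :=
  congrArg (fun c => c.2.2) h

theorem bounded_iff_of_regionCode_eq (h : regionCode x ν = regionCode x μ) (i : Fin k) :
    (ν i : ℝ) ≤ x i ↔ (μ i : ℝ) ≤ x i := by
  rw [← clockCode_le_iff, ← clockCode_le_iff, clockCode_eq_of_regionCode_eq h i]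

theorem floor_eq_and_fract_eq_zero_iff_of_clockCode_eq {i : Fin k} (hν : (ν i : ℝ) ≤ x i)
    (hμ : (μ i : ℝ) ≤ x i) (h : clockCode x ν i = clockCode x μ i) :
    ⌊(ν i : ℝ)⌋ = ⌊(μ i : ℝ)⌋ ∧ (Int.fract (ν i : ℝ) = 0 ↔ Int.fract (μ i : ℝ) = 0) := by
  simp only [clockCode, hν, hμ, if_true] at h
  have hcode : ⌊(ν i : ℝ)⌋₊ = ⌊(μ i : ℝ)⌋₊ ∧
      (Int.fract (ν i : ℝ) = 0 ↔ Int.fract (μ i : ℝ) = 0) := by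
    split_ifs at h with h1 h2 h2
    · exact ⟨by omega, iff_of_true h1 h2⟩
    · omega
    · omega
    · exact ⟨by omega, iff_of_false h1 h2⟩
  rw [← Int.natCast_floor_eq_floor (NNReal.coe_nonneg _),
    ← Int.natCast_floor_eq_floor (NNReal.coe_nonneg _), hcode.1]
  exact ⟨rfl, hcode.2⟩

theorem lt_add_one_iff_of_regionCode_eq (h : regionCode x ν = regionCode x μ) {i : Fin k}
    (hν : ¬ (ν i : ℝ) ≤ x i) : (ν i : ℝ) < x i + 1 ↔ (μ i : ℝ) < x i + 1 := by
  have hμ := (bounded_iff_of_regionCode_eq h i).not.1 hν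
  have hbit := congrFun (regionBit_eq_of_regionCode_eq h) ((sortPerm x ν).symm i)
  simp only [regionBit, ← sortPerm_eq_of_regionCode_eq h, Equiv.apply_symm_apply, hν, hμ,
    if_false] at hbit
  exact iff_of_eq hbit

theorem floor_eq_or_add_one_le_of_regionCode_eq (h : regionCode x ν = regionCode x μ)
    (i : Fin k) :
    ⌊(ν i : ℝ)⌋ = ⌊(μ i : ℝ)⌋ ∨ ((x i : ℝ) + 1 ≤ ν i ∧ (x i : ℝ) + 1 ≤ μ i) := by
  by_cases hν : (ν i : ℝ) ≤ x i
  · exact Or.inl (floor_eq_and_fract_eq_zero_iff_of_clockCode_eq hν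
      ((bounded_iff_of_regionCode_eq h i).1 hν) (clockCode_eq_of_regionCode_eq h i)).1
  have hμ := (bounded_iff_of_regionCode_eq h i).not.1 hν
  have hnear := lt_add_one_iff_of_regionCode_eq h hν
  by_cases hνnear : (ν i : ℝ) < x i + 1
  · have hμnear := hnear.1 hνnear
    left
    rw [(Int.floor_eq_iff (z := x i)).2 ⟨by push_cast; linarith, by push_cast; linarith⟩,
      (Int.floor_eq_iff (z := x i)).2 ⟨by push_cast; linarith, by push_cast; linarith⟩]
  · exact Or.inr ⟨not_lt.1 hνnear, not_lt.1 (hnear.not.1 hνnear)⟩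

theorem jump_iff_of_regionCode_eq (h : regionCode x ν = regionCode x μ) (t : Fin k) :
    (∀ s < t, boundedFract x ν (sortPerm x ν s) < boundedFract x ν (sortPerm x ν t)) ↔
      ∀ s < t, boundedFract x μ (sortPerm x ν s) < boundedFract x μ (sortPerm x ν t) := by
  by_cases ht : (ν (sortPerm x ν t) : ℝ) ≤ x (sortPerm x ν t)
  · have hbit := congrFun (regionBit_eq_of_regionCode_eq h) t
    simp only [regionBit, ← sortPerm_eq_of_regionCode_eq h, ht,
      (bounded_iff_of_regionCode_eq h _).1 ht, if_true] at hbit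
    exact iff_of_eq hbit
  · -- both values at `t` are the minimum `-1`, so neither side can hold below `t`
    have hνt : boundedFract x ν (sortPerm x ν t) = -1 := if_neg ht
    have hμt : boundedFract x μ (sortPerm x ν t) = -1 :=
      if_neg ((bounded_iff_of_regionCode_eq h _).not.1 ht)
    rw [hνt, hμt]
    exact ⟨fun hs s hst => absurd (hs s hst) (neg_one_le_boundedFract ν _).not_gt,
      fun hs s hst => absurd (hs s hst) (neg_one_le_boundedFract μ _).not_gt⟩

theorem fract_le_iff_of_regionCode_eq (h : regionCode x ν = regionCode x μ) {i j : Fin k}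
    (hi : (ν i : ℝ) ≤ x i) (hj : (ν j : ℝ) ≤ x j) :
    Int.fract (ν i : ℝ) ≤ Int.fract (ν j : ℝ) ↔ Int.fract (μ i : ℝ) ≤ Int.fract (μ j : ℝ) := by
  have mν : Monotone (boundedFract x ν ∘ sortPerm x ν) := Tuple.monotone_sort _
  have mμ : Monotone (boundedFract x μ ∘ sortPerm x ν) := by
    rw [sortPerm_eq_of_regionCode_eq h]
    exact Tuple.monotone_sort _
  have := mν.le_iff_le_of_jump_iff mμ (jump_iff_of_regionCode_eq h)
    ((sortPerm x ν).symm i) ((sortPerm x ν).symm j)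
  simpa only [comp_apply, Equiv.apply_symm_apply, boundedFract, hi, hj,
    (bounded_iff_of_regionCode_eq h i).1 hi, (bounded_iff_of_regionCode_eq h j).1 hj,
    if_true] using this

theorem of_regionCode_eq (h : regionCode x ν = regionCode x μ) {ν' : Fin k → NNReal}
    (hν' : RegEquiv k x ν ν') : RegEquiv k x μ ν' := by
  obtain ⟨hint, hzero, hfract⟩ := hν'
  refine ⟨fun i => ?_, fun i hi => ?_, fun i j hij hi hj => ?_⟩
  · rcases floor_eq_or_add_one_le_of_regionCode_eq h i with hfl | ⟨hνfar, hμfar⟩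
    · rw [← hfl]
      refine (hint i).imp_right fun ⟨hν, hν'⟩ => ⟨?_, hν'⟩
      exact lt_of_not_ge ((bounded_iff_of_regionCode_eq h i).not.1 (not_le.2 hν))
    · refine Or.inr ⟨by linarith, ?_⟩
      rcases hint i with hfl | ⟨_, hν'⟩
      · have : (x i : ℤ) + 1 ≤ ⌊(ν' i : ℝ)⌋ := hfl ▸ Int.le_floor.2 (by push_cast; exact hνfar)
        have := Int.le_floor.1 this
        push_cast at this
        linarith
      · exact hν'
  · have hνi := (bounded_iff_of_regionCode_eq h i).2 hi
    exact (floor_eq_and_fract_eq_zero_iff_of_clockCode_eq hνi hi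
      (clockCode_eq_of_regionCode_eq h i)).2.symm.trans (hzero i hνi)
  · have hνi := (bounded_iff_of_regionCode_eq h i).2 hi
    have hνj := (bounded_iff_of_regionCode_eq h j).2 hj
    exact (fract_le_iff_of_regionCode_eq h hνi hνj).symm.trans (hfract i j hij hνi hνj)

end RegEquiv

/-- The set of regions (equivalence classes of `≈`) is finite, bounded by
`k! · 2^k · ∏ᵢ (2xᵢ + 2)`. -/
theorem stmt18 (k : ℕ) (x : Fin k → ℕ) :
    {C : Set (Fin k → NNReal) | ∃ ν, C = {ν' | RegEquiv k x ν ν'}}.Finite ∧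
    {C : Set (Fin k → NNReal) | ∃ ν, C = {ν' | RegEquiv k x ν ν'}}.ncard ≤
      Nat.factorial k * 2 ^ k * ∏ i : Fin k, (2 * x i + 2) := by
  have hclass : FactorsThrough (fun ν => {ν' | RegEquiv k x ν ν'}) (RegEquiv.regionCode x) :=
    fun _ _ h => Set.ext fun _ =>
      ⟨RegEquiv.of_regionCode_eq h, RegEquiv.of_regionCode_eq h.symm⟩
  have hregions : {C : Set (Fin k → NNReal) | ∃ ν, C = {ν' | RegEquiv k x ν ν'}} =
      range (fun ν => {ν' | RegEquiv k x ν ν'}) := by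
    ext C
    exact exists_congr fun ν => eq_comm
  have hcard : Nat.card ((∀ i, Fin (2 * x i + 2)) × Equiv.Perm (Fin k) × (Fin k → Prop)) =
      Nat.factorial k * 2 ^ k * ∏ i : Fin k, (2 * x i + 2) := by
    simp only [Nat.card_eq_fintype_card, Fintype.card_prod, Fintype.card_pi, Fintype.card_fin,
      Fintype.card_perm, Fintype.card_prop, Finset.prod_const, Finset.card_univ]
    ring
  rw [hregions, ← hcard]
  exact hclass.finite_range_and_ncard_range_le
end
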